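/- arXiv:0707.1095 — 2 statements merged into one kernel-verified Lean document; each statement's English description precedes it below -/
import Mathlib

section
/- For every strongly connected digraph D with an out-branching, the maximum number of leaves in an out-tree of D equals the maximum number of leaves in an out-branching of D. -/
open Relation

/-- `T` is an out-branching (spanning out-tree) of the digraph `A` rooted at `r`. -/
def IsOutBranching {V : Type*} (A : V → V → Prop) (r : V) (T : V → V → Prop) : Prop :=
  (∀ u v, T u v → A u v) ∧
  (∀ u, ¬ T u r) ∧
  (∀ v, v ≠ r → ∃! u, T u v) ∧
  (∀ v, Relation.ReflTransGen T r v)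

/-- Number of leaves (out-degree zero vertices) of a spanning tree relation `T`. -/
noncomputable def leavesCount {V : Type*} (T : V → V → Prop) : ℕ :=
  {v : V | ∀ u, ¬ T v u}.ncard

/-- `T` is an out-tree of digraph `A` on vertex set `S`, rooted at `r`. -/
def IsOutTree {V : Type*} (A : V → V → Prop) (S : Set V) (r : V) (T : V → V → Prop) : Prop :=
  r ∈ S ∧
  (∀ u v, T u v → A u v ∧ u ∈ S ∧ v ∈ S) ∧
  (∀ u, ¬ T u r) ∧
  (∀ v ∈ S, v ≠ r → ∃! u, T u v) ∧
  (∀ v ∈ S, Relation.ReflTransGen T r v)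

/-- Number of leaves of an out-tree with vertex set `S` and arc relation `T`. -/
noncomputable def treeLeaves {V : Type*} (S : Set V) (T : V → V → Prop) : ℕ :=
  {v : V | v ∈ S ∧ ∀ u, ¬ T v u}.ncard

/-- A rooted (directed) tree on the whole vertex type. -/
def IsRootedTree {V : Type*} (T : V → V → Prop) (r : V) : Prop :=
  (∀ u, ¬ T u r) ∧
  (∀ v, v ≠ r → ∃! u, T u v) ∧
  (∀ v, Relation.ReflTransGen T r v)

/-- Out-degree of a vertex in a digraph/tree relation. -/
noncomputable def outDeg {V : Type*} (T : V → V → Prop) (v : V) : ℕ :=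
  {u : V | T v u}.ncard

/-- The underlying undirected simple graph of a digraph. -/
def UN {V : Type*} (A : V → V → Prop) : SimpleGraph V where
  Adj u v := u ≠ v ∧ (A u v ∨ A v u)
  symm := ⟨fun u v h => ⟨Ne.symm h.1, h.2.symm⟩⟩
  loopless := ⟨fun v h => h.1 rfl⟩

/-- The pathwidth of `G` is at most `w`: there is a path decomposition of width `≤ w`. -/
def pwLE {V : Type*} (G : SimpleGraph V) (w : ℕ) : Prop :=
  ∃ (s : ℕ) (X : Fin s → Finset V),
    (∀ v, ∃ i, v ∈ X i) ∧
    (∀ u v, G.Adj u v → ∃ i, u ∈ X i ∧ v ∈ X i) ∧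
    (∀ i j k : Fin s, i ≤ j → j ≤ k → ∀ v, v ∈ X i → v ∈ X k → v ∈ X j) ∧
    (∀ i, (X i).card ≤ w + 1)

/-- The strong component of the vertex `v` in digraph `A`. -/
def strongComp {V : Type*} (A : V → V → Prop) (v : V) : Set V :=
  {u : V | Relation.ReflTransGen A u v ∧ Relation.ReflTransGen A v u}

/-- Maximum number of leaves over all out-trees of `A` (ℓ(D)). -/
noncomputable def maxLeafOT {V : Type*} (A : V → V → Prop) : ℕ :=
  sSup {l : ℕ | ∃ (S : Set V) (r : V) (T : V → V → Prop), IsOutTree A S r T ∧ treeLeaves S T = l}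

/-- Maximum number of leaves over all out-branchings of `A` (ℓ_s(D)), `0` if none exists. -/
noncomputable def maxLeafOB {V : Type*} (A : V → V → Prop) : ℕ :=
  sSup {l : ℕ | ∃ (r : V) (T : V → V → Prop), IsOutBranching A r T ∧ leavesCount T = l}

/-- `T` is a 1-arc-exchange optimal out-branching of `A` rooted at `r`. -/
def OneAEOptimal {V : Type*} (A : V → V → Prop) (r : V) (T : V → V → Prop) : Prop :=
  IsOutBranching A r T ∧
  ∀ f x : V × V, T f.1 f.2 → A x.1 x.2 → ¬ T x.1 x.2 →
    IsOutBranching A r (fun a b => (T a b ∧ (a, b) ≠ f) ∨ (a, b) = x) →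
    leavesCount (fun a b => (T a b ∧ (a, b) ≠ f) ∨ (a, b) = x) ≤ leavesCount T

/-- Vertex separation of `G` is at most `k`, witnessed by some linear ordering. -/
def vsLE {V : Type*} [Fintype V] (G : SimpleGraph V) (k : ℕ) : Prop :=
  ∃ σ : Fin (Fintype.card V) ≃ V,
    ∀ j : Fin (Fintype.card V),
      {i : Fin (Fintype.card V) | i ≤ j ∧ ∃ i', j < i' ∧ G.Adj (σ i) (σ i')}.ncard ≤ k


/-!
An out-tree that misses some vertex can be grown by one arc: strong connectivity gives an arc
`u → w` leaving its vertex set, and attaching `w` below `u` costs at most the leaf `u` while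
creating the new leaf `w`. Repeating this turns any out-tree into an out-branching with at least
as many leaves, so `ℓ(D) ≤ ℓ_s(D)`; the reverse inequality holds because every out-branching is
an out-tree.
-/

section OutTree

variable {V : Type*} {A : V → V → Prop}

theorem Relation.ReflTransGen.exists_arc_out {S : Set V} {a v : V} (h : ReflTransGen A a v)
    (ha : a ∈ S) (hv : v ∉ S) : ∃ u ∈ S, ∃ w ∉ S, A u w := by
  induction h with
  | refl => exact absurd ha hv
  | @tail b c _ hbc ih =>
    by_cases hb : b ∈ S
    · exact ⟨b, hb, c, hv, hbc⟩
    · exact ih hb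

theorem IsOutBranching.isOutTree_univ {r : V} {T : V → V → Prop} (hT : IsOutBranching A r T) :
    IsOutTree A Set.univ r T := by
  obtain ⟨harc, hroot, hpar, hreach⟩ := hT
  exact ⟨trivial, fun u v h => ⟨harc u v h, trivial, trivial⟩, hroot, fun v _ => hpar v,
    fun v _ => hreach v⟩

theorem IsOutTree.isOutBranching_of_univ {r : V} {T : V → V → Prop}
    (hT : IsOutTree A Set.univ r T) : IsOutBranching A r T := by
  obtain ⟨-, harc, hroot, hpar, hreach⟩ := hT
  exact ⟨fun u v h => (harc u v h).1, hroot, fun v => hpar v trivial, fun v => hreach v trivial⟩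

theorem treeLeaves_univ (T : V → V → Prop) : treeLeaves Set.univ T = leavesCount T := by
  simp [treeLeaves, leavesCount]

section Grow

variable {S : Set V} {r u w : V} {T : V → V → Prop}

theorem IsOutTree.addLeaf (hT : IsOutTree A S r T) (hu : u ∈ S) (hw : w ∉ S) (huw : A u w) :
    IsOutTree A (insert w S) r (fun a b => T a b ∨ (a = u ∧ b = w)) := by
  obtain ⟨hr, harc, hroot, hpar, hreach⟩ := hT
  have hmono : ∀ {v}, ReflTransGen T r v →
      ReflTransGen (fun a b => T a b ∨ (a = u ∧ b = w)) r v :=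
    fun h => ReflTransGen.mono (fun _ _ => Or.inl) _ _ h
  refine ⟨Set.mem_insert_of_mem _ hr, ?_, ?_, ?_, ?_⟩
  · rintro a b (hab | ⟨rfl, rfl⟩)
    · obtain ⟨hA, ha, hb⟩ := harc a b hab
      exact ⟨hA, Set.mem_insert_of_mem _ ha, Set.mem_insert_of_mem _ hb⟩
    · exact ⟨huw, Set.mem_insert_of_mem _ hu, Set.mem_insert _ _⟩
  · rintro a (ha | ⟨-, rfl⟩)
    exacts [hroot a ha, hw hr]
  · rintro v (rfl | hv) hvr
    · refine ⟨u, Or.inr ⟨rfl, rfl⟩, ?_⟩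
      rintro p (hp | ⟨rfl, -⟩)
      exacts [absurd (harc p v hp).2.2 hw, rfl]
    · obtain ⟨p, hp, huniq⟩ := hpar v hv hvr
      refine ⟨p, Or.inl hp, ?_⟩
      rintro q (hq | ⟨-, rfl⟩)
      exacts [huniq q hq, absurd hv hw]
  · rintro v (rfl | hv)
    exacts [(hmono (hreach u hu)).tail (Or.inr ⟨rfl, rfl⟩), hmono (hreach v hv)]

/-- Sending `u` to `w` and fixing every other leaf injects the old leaves into the new ones. -/
theorem treeLeaves_le_addLeaf [Finite V] (harc : ∀ a b, T a b → a ∈ S) (hu : u ∈ S)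
    (hw : w ∉ S) :
    treeLeaves S T ≤ treeLeaves (insert w S) (fun a b => T a b ∨ (a = u ∧ b = w)) := by
  classical
  refine Set.ncard_le_ncard_of_injOn (fun v => if v = u then w else v) ?_ ?_
  · rintro v ⟨hv, hleaf⟩
    split_ifs with hvu
    · refine ⟨Set.mem_insert _ _, ?_⟩
      rintro x (hx | ⟨rfl, -⟩)
      exacts [hw (harc w x hx), hw hu]
    · refine ⟨Set.mem_insert_of_mem _ hv, ?_⟩
      rintro x (hx | ⟨rfl, -⟩)
      exacts [hleaf x hx, hvu rfl]
  · rintro v₁ ⟨hv₁, -⟩ v₂ ⟨hv₂, -⟩ h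
    simp only at h
    split_ifs at h with h₁ h₂ h₂
    · exact h₁.trans h₂.symm
    · exact absurd (h ▸ hv₂) hw
    · exact absurd (h ▸ hv₁) hw
    · exact h

end Grow

theorem IsOutTree.exists_isOutBranching_le [Finite V] {S : Set V} {r : V} {T : V → V → Prop}
    (hr : ∀ v, ReflTransGen A r v) (hT : IsOutTree A S r T) :
    ∃ B, IsOutBranching A r B ∧ treeLeaves S T ≤ leavesCount B := by
  by_cases hS : S = Set.univ
  · subst hS
    exact ⟨T, hT.isOutBranching_of_univ, (treeLeaves_univ T).le⟩
  obtain ⟨v, hv⟩ := (Set.ne_univ_iff_exists_notMem S).mp hS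
  obtain ⟨u, hu, w, hw, huw⟩ := (hr v).exists_arc_out hT.1 hv
  have hfewer : (insert w S)ᶜ.ncard < Sᶜ.ncard :=
    Set.ncard_lt_ncard (compl_lt_compl_iff_lt.mpr (Set.ssubset_insert hw))
  obtain ⟨B, hB, hle⟩ := (hT.addLeaf hu hw huw).exists_isOutBranching_le hr
  exact ⟨B, hB, (treeLeaves_le_addLeaf (fun a b h => (hT.2.1 a b h).2.1) hu hw).trans hle⟩
termination_by Sᶜ.ncard

end OutTree

theorem stmt_13_general {V : Type*} [Fintype V] (A : V → V → Prop)
    (hsc : ∀ u v : V, Relation.ReflTransGen A u v) :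
    maxLeafOT A = maxLeafOB A := by
  have hOT : BddAbove {l : ℕ | ∃ (S : Set V) (r : V) (T : V → V → Prop),
      IsOutTree A S r T ∧ treeLeaves S T = l} :=
    ⟨Nat.card V, by rintro _ ⟨S, r, T, -, rfl⟩; exact Set.ncard_le_card _⟩
  have hOB : BddAbove {l : ℕ | ∃ (r : V) (T : V → V → Prop),
      IsOutBranching A r T ∧ leavesCount T = l} :=
    ⟨Nat.card V, by rintro _ ⟨r, T, -, rfl⟩; exact Set.ncard_le_card _⟩
  refine le_antisymm (csSup_le' ?_) (csSup_le' ?_)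
  · rintro _ ⟨S, r, T, hT, rfl⟩
    obtain ⟨B, hB, hle⟩ := hT.exists_isOutBranching_le (hsc r)
    exact hle.trans (le_csSup hOB ⟨r, B, hB, rfl⟩)
  · rintro _ ⟨r, T, hT, rfl⟩
    exact le_csSup hOT ⟨Set.univ, r, T, hT.isOutTree_univ, treeLeaves_univ T⟩

/-- For a strongly connected digraph with an out-branching, the maximum number of leaves in an
out-tree equals the maximum number of leaves in an out-branching. -/
theorem stmt_13 {V : Type*} [Fintype V] [Nonempty V] (A : V → V → Prop)
    (hsc : ∀ u v : V, Relation.ReflTransGen A u v)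
    (hbr : ∃ (r : V) (T : V → V → Prop), IsOutBranching A r T) :
    maxLeafOT A = maxLeafOB A :=
  stmt_13_general A hsc
end

section
/- Let T be a rooted tree with λ ≥ 2 leaves. Then there exists a vertex v of T such that the vertex set of T can be partitioned into two sets V' and V'' whose intersection is {v}, each inducing a subtree of T (V' containing v with some components of T−v, and V'' containing v with the remaining components), such that each of the two subtrees, counted with v possibly becoming a new leaf, has at least (λ−6)/4 and at most (3λ+2)/4 leaves. -/
open Relation

/-- Number of leaves of the part `S` of a tree relation `T`: vertices of `S` all of whose
`T`-children lie outside `S`. -/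
noncomputable def partLeaves {V : Type*} (T : V → V → Prop) (S : Set V) : ℕ :=
  {x : V | x ∈ S ∧ ∀ y, T x y → y ∉ S}.ncard

/-! Put `q = ⌊(λ + 6) / 4⌋`, so that `2 ≤ q ≤ λ` and `λ + 2 ≤ 4q`. Choose a vertex `v` with
at least `q` leaves below it and minimal with this property: each child of `v` then has fewer
than `q` leaves below it. A minimal set of children of `v` carrying at least `q` leaves carries
`s ≤ 2q - 2` of them. Let `V'` be `v` together with the subtrees of these children and `V''` be
`v` together with the rest: `V'` has exactly `s` leaves and `V''` has `λ - s` or `λ - s + 1`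
(`v` may become a leaf), and `λ + 2 ≤ 4s ≤ 3λ + 2` gives both bounds. -/

theorem Finset.exists_subset_le_sum_lt_add {ι : Type*} (w : ι → ℕ) {q m : ℕ} (hq : 0 < q)
    (C : Finset ι) (hw : ∀ c ∈ C, w c ≤ m) (hC : q ≤ ∑ c ∈ C, w c) :
    ∃ S ⊆ C, q ≤ ∑ c ∈ S, w c ∧ ∑ c ∈ S, w c < q + m := by
  classical
  induction C using Finset.strongInduction with
  | _ C ih =>
    by_cases hsmall : ∑ c ∈ C, w c < q + m
    · exact ⟨C, subset_rfl, hC, hsmall⟩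
    obtain ⟨c, hc⟩ : C.Nonempty := Finset.nonempty_of_sum_ne_zero (f := w) (by omega)
    have hsplit := Finset.sum_erase_add C w hc
    have hwc := hw c hc
    obtain ⟨S, hSC, hS⟩ := ih (C.erase c) (Finset.erase_ssubset hc)
      (fun x hx => hw x (Finset.mem_of_mem_erase hx)) (by omega)
    exact ⟨S, hSC.trans (Finset.erase_subset c C), hS⟩

section PartLeaves

variable {V : Type*} (T : V → V → Prop)

def leafSet : Set V := {u | ∀ w, ¬ T u w}

def partLeafSet (S : Set V) : Set V := {x | x ∈ S ∧ ∀ y, T x y → y ∉ S}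

/-- `U` is a union of branches at `v`, i.e. of components of `T - v`. -/
def IsBranchUnion (v : V) (U : Set V) : Prop :=
  v ∉ U ∧ ∀ a b, T a b → a ≠ v → (a ∈ U ↔ b ∈ U)

variable {T}

theorem partLeaves_eq_ncard (S : Set V) : partLeaves T S = (partLeafSet T S).ncard := rfl

theorem inter_leafSet_subset_partLeafSet (S : Set V) : S ∩ leafSet T ⊆ partLeafSet T S :=
  fun _ ⟨hxS, hx⟩ => ⟨hxS, fun y hy => absurd hy (hx y)⟩

theorem partLeafSet_insert_subset {v : V} {U : Set V}
    (hU : ∀ a b, T a b → a ≠ v → (a ∈ U ↔ b ∈ U)) :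
    partLeafSet T (insert v U) ⊆ insert v (U ∩ leafSet T) := by
  rintro x ⟨hx, hchildren⟩
  rcases eq_or_ne x v with rfl | hxv
  · exact Set.mem_insert x _
  have hxU : x ∈ U := hx.resolve_left hxv
  exact Set.mem_insert_of_mem v
    ⟨hxU, fun y hy => hchildren y hy (Set.mem_insert_of_mem v ((hU x y hy hxv).1 hxU))⟩

namespace IsBranchUnion

variable {v : V} {U : Set V} (hU : IsBranchUnion T v U)
include hU

theorem rel_mem_compl_iff : ∀ a b, T a b → a ≠ v → (a ∈ Uᶜ ↔ b ∈ Uᶜ) :=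
  fun a b hab hav => not_congr (hU.2 a b hab hav)

theorem partLeaves_insert [Finite V] (hc : ∃ c ∈ U, T v c) :
    partLeaves T (insert v U) = (leafSet T ∩ U).ncard := by
  have hv : v ∉ partLeafSet T (insert v U) := fun ⟨_, hv⟩ =>
    let ⟨c, hcU, hvc⟩ := hc
    hv c hvc (Set.mem_insert_of_mem v hcU)
  rw [partLeaves_eq_ncard]
  refine le_antisymm (Set.ncard_le_ncard ?_) (Set.ncard_le_ncard ?_)
  · intro x hx
    obtain rfl | hx' := partLeafSet_insert_subset hU.2 hx
    · exact absurd hx hv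
    · exact ⟨hx'.2, hx'.1⟩
  · rintro x ⟨hxL, hxU⟩
    exact inter_leafSet_subset_partLeafSet _ ⟨Set.mem_insert_of_mem v hxU, hxL⟩

theorem partLeaves_insert_compl_mem [Finite V] :
    (leafSet T \ U).ncard ≤ partLeaves T (insert v Uᶜ) ∧
      partLeaves T (insert v Uᶜ) ≤ (leafSet T \ U).ncard + 1 := by
  rw [partLeaves_eq_ncard]
  constructor
  · refine Set.ncard_le_ncard fun x ⟨hxL, hxU⟩ => ?_
    exact inter_leafSet_subset_partLeafSet _ ⟨Set.mem_insert_of_mem v hxU, hxL⟩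
  · calc (partLeafSet T (insert v Uᶜ)).ncard ≤ (insert v (Uᶜ ∩ leafSet T)).ncard :=
          Set.ncard_le_ncard (partLeafSet_insert_subset hU.rel_mem_compl_iff)
      _ ≤ (Uᶜ ∩ leafSet T).ncard + 1 := Set.ncard_insert_le _ _
      _ = (leafSet T \ U).ncard + 1 := by rw [Set.sdiff_eq, Set.inter_comm]

end IsBranchUnion

end PartLeaves

section RootedTree

variable {V : Type*} {T : V → V → Prop}

variable (T) in
def descendants (v : V) : Set V := {u | ReflTransGen T v u}

variable (T) in
noncomputable def leavesBelow (v : V) : ℕ := (leafSet T ∩ descendants T v).ncard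

theorem descendants_eq_insert_biUnion (v : V) :
    descendants T v = insert v (⋃ c ∈ {c | T v c}, descendants T c) := by
  ext u
  simp only [descendants, Set.mem_ofPred_eq, Set.mem_insert_iff, Set.mem_iUnion, exists_prop]
  rw [ReflTransGen.cases_head_iff, eq_comm]

theorem leavesBelow_eq_one_of_mem_leafSet {v : V} (hv : v ∈ leafSet T) : leavesBelow T v = 1 := by
  have hchildren : {c | T v c} = ∅ := Set.eq_empty_of_forall_notMem hv
  rw [leavesBelow, descendants_eq_insert_biUnion, hchildren]
  simp [hv]

namespace IsRootedTree

variable {r : V} (hT : IsRootedTree T r)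
include hT

theorem eq_of_rel_of_rel {a b x : V} (ha : T a x) (hb : T b x) : a = b :=
  (hT.2.1 x fun hx => hT.1 a (hx ▸ ha)).unique ha hb

theorem not_transGen_self (v : V) : ¬ TransGen T v v := by
  induction hT.2.2 v with
  | refl =>
    intro h
    obtain ⟨_, _, h⟩ := TransGen.tail'_iff.1 h
    exact hT.1 _ h
  | tail _ huv ih =>
    intro h
    obtain ⟨w, hvw, hwv⟩ := TransGen.tail'_iff.1 h
    exact ih (TransGen.head' huv (hT.eq_of_rel_of_rel hwv huv ▸ hvw))

theorem not_mem_descendants_of_rel {v c : V} (h : T v c) : v ∉ descendants T c :=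
  fun hcv => hT.not_transGen_self v (TransGen.head' h hcv)

theorem descendants_ssubset_of_rel {v c : V} (h : T v c) :
    descendants T c ⊂ descendants T v :=
  (Set.ssubset_iff_of_subset fun _ hu => ReflTransGen.head h hu).2
    ⟨v, ReflTransGen.refl, hT.not_mem_descendants_of_rel h⟩

theorem eq_of_mem_descendants_of_rel {v c c' : V} (hc : T v c) (hc' : T v c')
    (h : c ∈ descendants T c') : c = c' := by
  rcases ReflTransGen.cases_tail h with rfl | ⟨w, hc'w, hwc⟩
  · rfl
  · cases hT.eq_of_rel_of_rel hwc hc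
    exact absurd hc'w (hT.not_mem_descendants_of_rel hc')

theorem disjoint_descendants {v c c' : V} (hc : T v c) (hc' : T v c') (hne : c ≠ c') :
    Disjoint (descendants T c) (descendants T c') := by
  refine Set.disjoint_left.2 fun x hx hx' => hne ?_
  have hunique : Relator.RightUnique (Function.swap T) :=
    fun _ _ _ ha hb => hT.eq_of_rel_of_rel ha hb
  rcases ReflTransGen.total_of_right_unique hunique (reflTransGen_swap.2 hx)
    (reflTransGen_swap.2 hx') with h | h
  · exact hT.eq_of_mem_descendants_of_rel hc hc' (reflTransGen_swap.1 h)
  · exact (hT.eq_of_mem_descendants_of_rel hc' hc (reflTransGen_swap.1 h)).symm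

theorem isBranchUnion_biUnion {v : V} {S : Set V} (hS : ∀ c ∈ S, T v c) :
    IsBranchUnion T v (⋃ c ∈ S, descendants T c) := by
  simp only [IsBranchUnion, Set.mem_iUnion, exists_prop, not_exists, not_and]
  refine ⟨fun c hc => hT.not_mem_descendants_of_rel (hS c hc), fun a b hab hav => ⟨?_, ?_⟩⟩
  · rintro ⟨c, hc, hca⟩
    exact ⟨c, hc, hca.tail hab⟩
  · rintro ⟨c, hc, hcb⟩
    rcases ReflTransGen.cases_tail hcb with rfl | ⟨w, hcw, hwb⟩
    · exact absurd (hT.eq_of_rel_of_rel hab (hS _ hc)) hav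
    · exact ⟨c, hc, hT.eq_of_rel_of_rel hab hwb ▸ hcw⟩

theorem ncard_leafSet_inter_biUnion [Finite V] {v : V} (S : Finset V) (hS : ∀ c ∈ S, T v c) :
    (leafSet T ∩ ⋃ c ∈ S, descendants T c).ncard = ∑ c ∈ S, leavesBelow T c := by
  rw [Set.inter_iUnion₂, ← finsum_mem_coe_finset]
  refine S.finite_toSet.ncard_biUnion (fun _ _ => Set.toFinite _) fun c hc c' hc' hne => ?_
  exact (hT.disjoint_descendants (hS c hc) (hS c' hc') hne).mono
    Set.inter_subset_right Set.inter_subset_right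

theorem leavesBelow_eq_sum [Finite V] {v : V} (hv : v ∉ leafSet T) (C : Finset V)
    (hC : ∀ c, c ∈ C ↔ T v c) : leavesBelow T v = ∑ c ∈ C, leavesBelow T c := by
  rw [← hT.ncard_leafSet_inter_biUnion C fun c => (hC c).1, leavesBelow,
    descendants_eq_insert_biUnion, Set.inter_insert_of_notMem hv]
  simp only [Set.mem_ofPred_eq, hC]

theorem leavesBelow_root : leavesBelow T r = leavesCount T := by
  have hall : descendants T r = Set.univ := Set.eq_univ_of_forall hT.2.2
  rw [leavesBelow, hall, Set.inter_univ]
  rfl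

theorem exists_leavesBelow_ge_forall_children_lt [Finite V] {q : ℕ} (hq : q ≤ leavesCount T) :
    ∃ v, q ≤ leavesBelow T v ∧ ∀ c, T v c → leavesBelow T c < q := by
  obtain ⟨v, hv, hmin⟩ := Set.exists_min_image {v | q ≤ leavesBelow T v}
    (fun v => (descendants T v).ncard) (Set.toFinite _)
    ⟨r, show q ≤ leavesBelow T r by rwa [hT.leavesBelow_root]⟩
  refine ⟨v, hv, fun c hc => ?_⟩
  by_contra! hqc
  have := hmin c hqc
  have := Set.ncard_lt_ncard (hT.descendants_ssubset_of_rel hc)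
  omega

theorem exists_isBranchUnion_leaves_between [Finite V] {q : ℕ} (hq : 2 ≤ q)
    (hqr : q ≤ leavesCount T) :
    ∃ v U, IsBranchUnion T v U ∧ (∃ c ∈ U, T v c) ∧
      q ≤ (leafSet T ∩ U).ncard ∧ (leafSet T ∩ U).ncard + 2 ≤ 2 * q := by
  obtain ⟨v, hv, hlight⟩ := hT.exists_leavesBelow_ge_forall_children_lt hqr
  have hvL : v ∉ leafSet T := fun h => by rw [leavesBelow_eq_one_of_mem_leafSet h] at hv; omega
  set C := (Set.toFinite {c | T v c}).toFinset
  have hC : ∀ c, c ∈ C ↔ T v c := fun c => Set.Finite.mem_toFinset _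
  obtain ⟨S, hSC, hqS, hSq⟩ := Finset.exists_subset_le_sum_lt_add (leavesBelow T) (m := q - 1)
    (by omega) C (fun c hc => by have := hlight c ((hC c).1 hc); omega)
    (hT.leavesBelow_eq_sum hvL C hC ▸ hv)
  have hS : ∀ c ∈ S, T v c := fun c hc => (hC c).1 (hSC hc)
  obtain ⟨c, hc⟩ : S.Nonempty := Finset.nonempty_of_sum_ne_zero (f := leavesBelow T) (by omega)
  refine ⟨v, ⋃ c ∈ S, descendants T c, hT.isBranchUnion_biUnion hS,
    ⟨c, Set.mem_biUnion hc ReflTransGen.refl, hS c hc⟩, ?_⟩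
  rw [hT.ncard_leafSet_inter_biUnion S hS]
  omega

end IsRootedTree

end RootedTree

/-- A rooted tree with `λ ≥ 2` leaves admits a vertex `v` splitting it into two subtrees
(meeting exactly in `v`, each a union of `v` with some components of `T - v`) each having
between `(λ-6)/4` and `(3λ+2)/4` leaves. -/
theorem stmt_18 {V : Type*} [Fintype V] (T : V → V → Prop) (r : V)
    (hT : IsRootedTree T r) (lam : ℕ) (hlam : leavesCount T = lam) (h2 : 2 ≤ lam) :
    ∃ (v : V) (V' V'' : Set V),
      V' ∪ V'' = Set.univ ∧
      V' ∩ V'' = {v} ∧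
      (∀ a b : V, T a b → a ≠ v → b ≠ v → (a ∈ V' ↔ b ∈ V')) ∧
      (((lam : ℝ) - 6) / 4 ≤ (partLeaves T V' : ℝ) ∧
        (partLeaves T V' : ℝ) ≤ (3 * (lam : ℝ) + 2) / 4) ∧
      (((lam : ℝ) - 6) / 4 ≤ (partLeaves T V'' : ℝ) ∧
        (partLeaves T V'' : ℝ) ≤ (3 * (lam : ℝ) + 2) / 4) := by
  obtain ⟨v, U, hU, hchild, hqs, hsq⟩ :=
    hT.exists_isBranchUnion_leaves_between (q := (lam + 6) / 4) (by omega) (by omega)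
  have hsplit : (leafSet T ∩ U).ncard + (leafSet T \ U).ncard = lam :=
    hlam ▸ Set.ncard_inter_add_ncard_sdiff_eq_ncard _ _
  obtain ⟨hcompl_lo, hcompl_hi⟩ := hU.partLeaves_insert_compl_mem
  have bounds (p : ℕ) (hlo : lam ≤ 4 * p + 6) (hhi : 4 * p ≤ 3 * lam + 2) :
      ((lam : ℝ) - 6) / 4 ≤ p ∧ (p : ℝ) ≤ (3 * lam + 2) / 4 := by
    have hlo' : (lam : ℝ) ≤ 4 * p + 6 := by exact_mod_cast hlo
    have hhi' : (4 * p : ℝ) ≤ 3 * lam + 2 := by exact_mod_cast hhi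
    constructor <;> linarith
  refine ⟨v, insert v U, insert v Uᶜ, ?_, ?_, fun a b hab hav hbv => ?_, ?_, ?_⟩
  · rw [← Set.insert_union_distrib, Set.union_compl_self, Set.insert_eq_of_mem (Set.mem_univ v)]
  · rw [← Set.insert_inter_distrib, Set.inter_compl_self, insert_empty_eq]
  · simpa only [Set.mem_insert_iff, hav, hbv, false_or] using hU.2 a b hab hav
  · rw [hU.partLeaves_insert hchild]
    exact bounds _ (by omega) (by omega)
  · exact bounds _ (by omega) (by omega)
end
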